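/- Let G be a polycyclic group and φ, ψ endomorphisms of G, with φ̄, ψ̄ the induced endomorphisms on the abelianization G/G'. Then R(φ,ψ) is finite if and only if R(φ̄,ψ̄) is finite and R(ι_g∘φ|_{G'}, ψ|_{G'}) is finite for every g ∈ G. -/

import Mathlib

/-- A subnormal series of `G` with cyclic factors, witnessing that `G` is polycyclic. -/
structure PolySeries (G : Type*) [Group G] where
  n : ℕ
  s : Fin (n + 1) → Subgroup G
  bot : s 0 = ⊥
  top : s (Fin.last n) = ⊤
  le : ∀ i : Fin n, s i.castSucc ≤ s i.succ
  normal : ∀ i : Fin n, ((s i.castSucc).subgroupOf (s i.succ)).Normal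
  cyclic : ∀ i : Fin n, ∃ x : s i.succ, ∀ y : s i.succ, ∃ k : ℤ,
    y * (x ^ k)⁻¹ ∈ (s i.castSucc).subgroupOf (s i.succ)

/-- The commutator subgroup is fully invariant. -/
theorem apply_mem_commutator {G : Type*} [Group G] (φ : G →* G) {g : G}
    (h : g ∈ commutator G) : φ g ∈ commutator G := by
  have h2 : φ g ∈ (commutator G).map φ := Subgroup.mem_map_of_mem φ h
  rw [commutator_def, Subgroup.map_commutator] at h2
  exact Subgroup.commutator_mono le_top le_top h2

/-- The restriction of an endomorphism to the commutator subgroup. -/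
def restrictCommutator {G : Type*} [Group G] (φ : G →* G) :
    commutator G →* commutator G :=
  (φ.domRestrict (commutator G)).codRestrict (commutator G)
    (fun x => apply_mem_commutator φ x.2)

/-- The endomorphism induced on the abelianisation G/G'. -/
def abelianizationMap {G : Type*} [Group G] (φ : G →* G) :
    (G ⧸ commutator G) →* (G ⧸ commutator G) :=
  QuotientGroup.map (commutator G) (commutator G) φ
    (fun _ hx => apply_mem_commutator φ hx)

/-- The (φ,ψ)-twisted conjugacy relation. -/
def twistRel {G : Type*} [Group G] (φ ψ : G →* G) : G → G → Prop :=
  fun a b => ∃ h : G, a = ψ h * b * (φ h)⁻¹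


/-!
A polycyclic group is finitely generated, hence so is `A = G/G'`. On `A` the twisted classes of
`(φ̄, ψ̄)` are the cosets of the image of `f = ψ̄ - φ̄` (written additively), and a finite
cokernel of `f` forces a finite kernel, i.e. finitely many coincidences `φ̄ x = ψ̄ x`: by
Noetherianity `ker f` meets `range fⁿ` trivially for large `n`, and `range fⁿ` still has finite
index.

Every `(φ, ψ)`-class meets a coset `G'g`, and `n ↦ ng` maps `(ι_g ∘ φ, ψ)`-classes of `G'` to
`(φ, ψ)`-classes of `G`. Choosing one `g` per class of `(φ̄, ψ̄)` gives a surjection onto the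
classes of `(φ, ψ)`. Conversely, if `ng` and `n₀g` are `(φ, ψ)`-conjugate by `h`, then the image
of `h` in `A` is a coincidence, and `n` is `(ι_g ∘ φ, ψ)`-conjugate to a twist of `n₀` by a fixed
lift of that coincidence; so each fibre of `n ↦ ng` is finite.
-/

theorem Subgroup.fg_of_forall_mul_zpow_inv_mem {G : Type*} [Group G] {H K : Subgroup G}
    (hH : H.FG) (hHK : H ≤ K) {x : G} (hx : x ∈ K) (hK : ∀ y ∈ K, ∃ k : ℤ, y * (x ^ k)⁻¹ ∈ H) :
    K.FG := by
  have hzpowers : (Subgroup.zpowers x).FG :=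
    ⟨{x}, by rw [Finset.coe_singleton, Subgroup.zpowers_eq_closure]⟩
  convert hH.sup hzpowers
  refine le_antisymm (fun y hy => ?_) (sup_le hHK ((Subgroup.zpowers_le).mpr hx))
  obtain ⟨k, hk⟩ := hK y hy
  simpa using Subgroup.mul_mem _ (Subgroup.mem_sup_left hk)
    (Subgroup.mem_sup_right (Subgroup.zpow_mem_zpowers x k))

theorem PolySeries.fg {G : Type*} [Group G] (p : PolySeries G) : Group.FG G := by
  suffices ∀ i, (p.s i).FG by
    rw [Group.fg_def, ← p.top]
    exact this _
  intro i
  induction i using Fin.induction with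
  | zero => rw [p.bot]; exact Subgroup.FG.bot
  | succ i ih =>
    obtain ⟨x, hx⟩ := p.cyclic i
    refine Subgroup.fg_of_forall_mul_zpow_inv_mem ih (p.le i) x.2 fun y hy => ?_
    obtain ⟨k, hk⟩ := hx ⟨y, hy⟩
    exact ⟨k, by simpa [Subgroup.mem_subgroupOf] using hk⟩

theorem Submodule.index_toAddSubgroup_ne_zero_iff {R M : Type*} [Ring R] [AddCommGroup M]
    [Module R M] (p : Submodule R M) : p.toAddSubgroup.index ≠ 0 ↔ Finite (M ⧸ p) :=
  AddSubgroup.finiteIndex_iff.symm.trans AddSubgroup.finiteIndex_iff_finite_quotient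

namespace LinearMap

variable {M : Type*} [AddCommGroup M]

theorem index_range_pow_ne_zero (f : Module.End ℤ M) (hf : (range f).toAddSubgroup.index ≠ 0)
    (n : ℕ) : (range (f ^ n)).toAddSubgroup.index ≠ 0 := by
  induction n with
  | zero => simp [Module.End.one_eq_id]
  | succ n ih =>
    rw [pow_succ, Module.End.mul_eq_comp, range_comp, Submodule.map_toAddSubgroup,
      AddSubgroup.index_map]
    exact mul_ne_zero (fun h => hf (Nat.eq_zero_of_zero_dvd
      (h ▸ AddSubgroup.index_dvd_of_le le_sup_left))) ih

theorem finite_ker_of_finite_quotient_range [Module.Finite ℤ M] (f : Module.End ℤ M)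
    [Finite (M ⧸ range f)] : Finite (ker f) := by
  obtain ⟨n, hn⟩ := Filter.eventually_atTop.mp f.eventually_disjoint_ker_pow_range_pow
  have : Finite (M ⧸ range (f ^ (n + 1))) := (Submodule.index_toAddSubgroup_ne_zero_iff _).mp
    (index_range_pow_ne_zero f ((Submodule.index_toAddSubgroup_ne_zero_iff _).mpr ‹_›) _)
  have hdisj : Disjoint (ker f) (range (f ^ (n + 1))) := by
    refine (hn (n + 1) n.le_succ).mono_left ?_
    rw [pow_succ, Module.End.mul_eq_comp]
    exact ker_le_ker_comp f _
  refine Finite.of_injective _ ((injective_domRestrict_iff (f := (range (f ^ (n + 1))).mkQ)).mpr ?_)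
  rwa [Submodule.ker_mkQ]

end LinearMap

namespace twistRel

variable {G H : Type*} [Group G] [Group H]

theorem equivalence (φ ψ : G →* G) : Equivalence (twistRel φ ψ) where
  refl _ := ⟨1, by simp⟩
  symm := by
    rintro _ _ ⟨h, rfl⟩
    exact ⟨h⁻¹, by simp [mul_assoc]⟩
  trans := by
    rintro _ _ _ ⟨h, rfl⟩ ⟨k, rfl⟩
    exact ⟨h * k, by simp [mul_assoc]⟩

theorem quot_mk_eq_iff {φ ψ : G →* G} {a b : G} :
    Quot.mk (twistRel φ ψ) a = Quot.mk (twistRel φ ψ) b ↔ twistRel φ ψ a b :=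
  Quot.eq.trans (equivalence φ ψ).eqvGen_iff

theorem finite_quot_of_surjective {φ ψ : G →* G} {φ' ψ' : H →* H} (π : G →* H)
    (hπ : Function.Surjective π) (hφ : ∀ x, π (φ x) = φ' (π x)) (hψ : ∀ x, π (ψ x) = ψ' (π x))
    [Finite (Quot (twistRel φ ψ))] : Finite (Quot (twistRel φ' ψ')) := by
  refine Finite.of_surjective (α := Quot (twistRel φ ψ))
    (Quot.lift (fun a => Quot.mk (twistRel φ' ψ') (π a)) fun a b hab => Quot.sound ?_) fun x => ?_
  · obtain ⟨h, rfl⟩ := hab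
    exact ⟨π h, by rw [map_mul, map_mul, map_inv, hφ, hψ]⟩
  · induction x using Quot.ind with
    | mk b =>
      obtain ⟨a, rfl⟩ := hπ b
      exact ⟨Quot.mk _ a, rfl⟩

theorem finite_eqLocus {A : Type*} [CommGroup A] [Group.FG A] (φ ψ : A →* A)
    [Finite (Quot (twistRel φ ψ))] : Finite (φ.eqLocus ψ) := by
  let f : Module.End ℤ (Additive A) := (MonoidHom.toAdditive (ψ / φ)).toIntLinearMap
  have : Module.Finite ℤ (Additive A) := Module.Finite.iff_addGroup_fg.mpr inferInstance
  have : Finite (Additive A ⧸ LinearMap.range f) := by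
    refine Finite.of_surjective (α := Quot (twistRel φ ψ))
      (Quot.lift (fun a => Submodule.Quotient.mk (p := LinearMap.range f) (Additive.ofMul a))
        fun a b hab => (Submodule.Quotient.eq _).mpr ?_) fun x => ?_
    · obtain ⟨h, rfl⟩ := hab
      refine ⟨Additive.ofMul h, ?_⟩
      show Additive.ofMul (ψ h / φ h) = Additive.ofMul (ψ h * b * (φ h)⁻¹ / b)
      congr 1
      rw [mul_right_comm, mul_div_cancel_right, div_eq_mul_inv]
    · obtain ⟨m, rfl⟩ := Submodule.Quotient.mk_surjective _ x
      exact ⟨Quot.mk _ m.toMul, rfl⟩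
  have := LinearMap.finite_ker_of_finite_quotient_range f
  refine Finite.of_injective
    (fun x : φ.eqLocus ψ => (⟨Additive.ofMul (x : A), ?_⟩ : LinearMap.ker f))
    fun x y hxy => Subtype.ext (by simpa using hxy)
  show Additive.ofMul (ψ x / φ x) = 0
  rw [x.2, div_self']
  rfl

end twistRel

theorem Abelianization.of_surjective {G : Type*} [Group G] :
    Function.Surjective (Abelianization.of : G →* Abelianization G) :=
  QuotientGroup.mk_surjective

theorem exists_twistRel_mul_of_twistRel_map {G : Type*} [Group G] {N : Subgroup G} [N.Normal]
    {φ ψ : G →* G} (hφ : N ≤ N.comap φ) (hψ : N ≤ N.comap ψ) {a b : G}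
    (hab : twistRel (QuotientGroup.map N N φ hφ) (QuotientGroup.map N N ψ hψ) a b) :
    ∃ n ∈ N, twistRel φ ψ a (n * b) := by
  obtain ⟨h, e⟩ := hab
  obtain ⟨h, rfl⟩ := QuotientGroup.mk_surjective h
  refine ⟨(ψ h)⁻¹ * a * φ h * b⁻¹, ?_, h, by group⟩
  rw [← QuotientGroup.eq_one_iff]
  simp only [QuotientGroup.mk_mul, QuotientGroup.mk_inv, e]
  simp [QuotientGroup.map_mk, mul_assoc]

section Commutator

open Abelianization

variable {G : Type*} [Group G] (φ ψ : G →* G)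

abbrev commutatorTwistRel (g : G) : commutator G → commutator G → Prop :=
  twistRel (restrictCommutator ((MulAut.conj g).toMonoidHom.comp φ)) (restrictCommutator ψ)

@[simp]
theorem coe_restrictCommutator (u : commutator G) : (restrictCommutator φ u : G) = φ u :=
  rfl

variable {φ ψ}

theorem twistRel_mul_right_of_commutatorTwistRel {g : G} {m m' : commutator G}
    (hm : commutatorTwistRel φ ψ g m m') : twistRel φ ψ (m * g) (m' * g) := by
  obtain ⟨u, rfl⟩ := hm
  exact ⟨u, by simp [mul_assoc]⟩

theorem commutatorTwistRel_of_eq {g h t : G} (hu : h * t⁻¹ ∈ commutator G) {n n₀ : commutator G}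
    (hm : ψ t * n₀ * (g * φ t * g⁻¹)⁻¹ ∈ commutator G) (e : n * g = ψ h * (n₀ * g) * (φ h)⁻¹) :
    commutatorTwistRel φ ψ g n ⟨_, hm⟩ := by
  refine ⟨⟨h * t⁻¹, hu⟩, Subtype.ext ?_⟩
  have hn : (n : G) = ψ h * n₀ * g * (φ h)⁻¹ * g⁻¹ := by
    rw [← mul_inv_cancel_right (n : G) g, e]; group
  simp only [Subgroup.coe_mul, Subgroup.coe_inv, coe_restrictCommutator, MonoidHom.coe_comp,
    MulEquiv.coe_toMonoidHom, Function.comp_apply, MulAut.conj_apply, hn, map_mul, map_inv]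
  group

theorem of_coe_commutator (n : commutator G) : of (n : G) = 1 := by
  rw [← MonoidHom.mem_ker, ker_of]
  exact n.2

theorem of_mem_eqLocus_of_eq {a b h : G} (hab : of a = of b) (e : a = ψ h * b * (φ h)⁻¹) :
    of h ∈ (map φ).eqLocus (map ψ) := by
  have := congrArg of e
  simp only [map_mul, map_inv, ← map_of, hab] at this
  rw [mul_right_comm, right_eq_mul, mul_inv_eq_one] at this
  exact this.symm

theorem mul_conj_inv_mem_commutator {t : G} (ht : of t ∈ (map φ).eqLocus (map ψ)) {n : G}
    (hn : n ∈ commutator G) (g : G) : ψ t * n * (g * φ t * g⁻¹)⁻¹ ∈ commutator G := by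
  rw [← ker_of, MonoidHom.mem_ker] at hn ⊢
  simp only [map_mul, map_inv, ← map_of, hn]
  rw [ht, mul_one, mul_inv_cancel_comm, mul_inv_cancel]

variable (φ ψ)

def quotMulRight (g : G) : Quot (commutatorTwistRel φ ψ g) → Quot (twistRel φ ψ) :=
  Quot.lift (fun m => Quot.mk _ ((m : G) * g)) fun _ _ hm =>
    Quot.sound (twistRel_mul_right_of_commutatorTwistRel hm)

theorem finite_quot_twistRel_of_finite_abelianization
    [Finite (Quot (twistRel (abelianizationMap φ) (abelianizationMap ψ)))]
    [∀ g, Finite (Quot (commutatorTwistRel φ ψ g))] : Finite (Quot (twistRel φ ψ)) := by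
  let rep : Quot (twistRel (abelianizationMap φ) (abelianizationMap ψ)) → G := fun c => c.out.out
  refine Finite.of_surjective (fun x : Σ c, Quot (commutatorTwistRel φ ψ (rep c)) =>
    quotMulRight φ ψ _ x.2) fun y => ?_
  induction y using Quot.ind with | mk a =>
  let c := Quot.mk (twistRel (abelianizationMap φ) (abelianizationMap ψ)) (a : G ⧸ commutator G)
  have hc : twistRel (abelianizationMap φ) (abelianizationMap ψ) a (rep c) := by
    rw [← twistRel.quot_mk_eq_iff, QuotientGroup.out_eq', Quot.out_eq]
  obtain ⟨n, hn, han⟩ := exists_twistRel_mul_of_twistRel_map _ _ hc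
  exact ⟨⟨c, Quot.mk _ ⟨n, hn⟩⟩, (twistRel.quot_mk_eq_iff.mpr han).symm⟩

theorem finite_quot_twistRel_abelianizationMap [Finite (Quot (twistRel φ ψ))] :
    Finite (Quot (twistRel (abelianizationMap φ) (abelianizationMap ψ))) :=
  twistRel.finite_quot_of_surjective (QuotientGroup.mk' _) (QuotientGroup.mk'_surjective _)
    (fun _ => rfl) (fun _ => rfl)

theorem finite_quot_commutatorTwistRel [Group.FG G] [Finite (Quot (twistRel φ ψ))] (g : G) :
    Finite (Quot (commutatorTwistRel φ ψ g)) := by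
  -- `Abelianization.map φ` is definitionally `abelianizationMap φ`.
  have : Finite (Quot (twistRel (map φ) (map ψ))) := finite_quot_twistRel_abelianizationMap φ ψ
  have : Group.FG (Abelianization G) := Group.fg_of_surjective of_surjective
  have := twistRel.finite_eqLocus (map φ) (map ψ)
  let t := Function.surjInv (of_surjective (G := G))
  have ht (k : (map φ).eqLocus (map ψ)) : of (t k) ∈ (map φ).eqLocus (map ψ) := by
    rw [Function.surjInv_eq (f := of)]; exact k.2
  refine Set.finite_univ_iff.mp (Set.Finite.of_finite_fibers (quotMulRight φ ψ g)
    (Set.toFinite _) ?_)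
  rintro _ ⟨x₀, -, rfl⟩
  induction x₀ using Quot.ind with | mk n₀ =>
  refine (Set.finite_range fun k => Quot.mk (commutatorTwistRel φ ψ g)
    ⟨_, mul_conj_inv_mem_commutator (ht k) n₀.2 g⟩).subset ?_
  rintro x ⟨-, hx⟩
  induction x using Quot.ind with | mk n =>
  obtain ⟨h, e⟩ := twistRel.quot_mk_eq_iff.mp hx
  have hk := of_mem_eqLocus_of_eq (by simp only [map_mul, of_coe_commutator]) e
  refine ⟨⟨of h, hk⟩, (Quot.sound (commutatorTwistRel_of_eq ?_ _ e)).symm⟩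
  rw [← ker_of, MonoidHom.mem_ker, map_mul, map_inv, Function.surjInv_eq (f := of),
    mul_inv_cancel]

end Commutator

/-- for a polycyclic group G, R(φ,ψ) < ∞ iff R(φ̄,ψ̄) < ∞ and
    R(ι_g∘φ|_{G'}, ψ|_{G'}) < ∞ for every g ∈ G. -/
theorem reidNr_finite_iff_polycyclic {G : Type*} [Group G]
    (hpoly : Nonempty (PolySeries G)) (φ ψ : G →* G) :
    Finite (Quot (twistRel φ ψ)) ↔
      (Finite (Quot (twistRel (abelianizationMap φ) (abelianizationMap ψ))) ∧
        ∀ g : G, Finite (Quot (twistRel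
          (restrictCommutator ((MulAut.conj g).toMonoidHom.comp φ))
          (restrictCommutator ψ)))) := by
  have : Group.FG G := hpoly.some.fg
  constructor
  · intro _
    exact ⟨finite_quot_twistRel_abelianizationMap φ ψ, finite_quot_commutatorTwistRel φ ψ⟩
  · rintro ⟨_, _⟩
    exact finite_quot_twistRel_of_finite_abelianization φ ψ
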